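/- arXiv:1801.09018 — 3 statements merged into one kernel-verified Lean document; each statement's English description precedes it below -/
import Mathlib

section
/- Under permutation-invariance and interference, for every k ≤ K the quantity I(X_i; Y_k | X_{[i−1]}) is strictly increasing in i: for all integers 1 ≤ i < j ≤ k ≤ K, I(X_i; Y_k | X_{[i−1]}) < I(X_j; Y_k | X_{[j−1]}). -/
/-!
Write `h m = H(X_{[m]}, Y_k)`. The inputs are i.i.d., so `H(X_{[m]}) = m H(P_X)` and the `i`-th
chain-rule term is `h (i-1) - h i + H(P_X)`; it therefore suffices to show that `h` is strictly
concave. Concavity is the nonnegativity of `I(X_{m+1}; X_{m+2} | X_{[m]}, Y)` together with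
exchangeability of the inputs, which gives `H(X_{[m]}, X_{m+1}, Y) = H(X_{[m]}, X_{m+2}, Y)`.
In the equality case `X_{m+1}` and `X_{m+2}` are conditionally independent given
`Z = (X_{[m]}, Y)`; their conditional laws `r(a, z) / t(z)` coincide and `∑_z r(a,z)² / t(z)` is
`P(X_{m+1} = X_{m+2} = a) = P_X(a)²`, so equality in Cauchy–Schwarz forces `r(a, z) = P_X(a) t(z)`.
Then `(X_{m+1}, X_{m+2})` is independent of `Z`, which makes `X_{m+2}` conditionally independent of
`X_{[m+1]}` given `Y`, contradicting interference.
-/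

open scoped Classical
open Finset

noncomputable section

namespace RAC

variable {𝓧 𝓨 : Type*} [Fintype 𝓧] [Fintype 𝓨]

/-- Shannon entropy of a pmf on a finite type (natural logarithm, `0 · ln 0 = 0`). -/
def entropy {α : Type*} [Fintype α] (q : α → ℝ) : ℝ := ∑ a, Real.negMulLog (q a)

/-- Reduced channel `W_k`: the last `K − k` transmitters send the silence symbol `x0`. -/
def redW {K : ℕ} (W : (Fin K → 𝓧) → 𝓨 → ℝ) (x0 : 𝓧) (k : ℕ)
    (x : Fin k → 𝓧) (y : 𝓨) : ℝ :=
  W (fun i => if h : (i : ℕ) < k then x ⟨i, h⟩ else x0) y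

/-- Joint pmf of `(X_{[k]}, Y_k)` under i.i.d. inputs `pX`. -/
def joint {K : ℕ} (W : (Fin K → 𝓧) → 𝓨 → ℝ) (x0 : 𝓧) (pX : 𝓧 → ℝ) (k : ℕ)
    (xy : (Fin k → 𝓧) × 𝓨) : ℝ :=
  (∏ i, pX (xy.1 i)) * redW W x0 k xy.1 xy.2

/-- Marginal pmf of `(X_S, Y)` for `S ⊆ [k]`. -/
def margXY {k : ℕ} (P : ((Fin k → 𝓧) × 𝓨) → ℝ) (S : Finset (Fin k))
    (uy : (S → 𝓧) × 𝓨) : ℝ :=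
  ∑ x : Fin k → 𝓧, if ∀ i : S, x i.1 = uy.1 i then P (x, uy.2) else 0

/-- Marginal pmf of `X_S` for `S ⊆ [k]`. -/
def margX {k : ℕ} (P : ((Fin k → 𝓧) × 𝓨) → ℝ) (S : Finset (Fin k))
    (u : S → 𝓧) : ℝ :=
  ∑ x : Fin k → 𝓧, ∑ y : 𝓨, if ∀ i : S, x i.1 = u i then P (x, y) else 0

/-- Conditional mutual information
`I(X_A; Y | X_B) = (H(Y,X_B) − H(X_B)) − (H(Y,X_{A∪B}) − H(X_{A∪B}))`. -/
def condMI {k : ℕ} (P : ((Fin k → 𝓧) × 𝓨) → ℝ) (A B : Finset (Fin k)) : ℝ :=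
  (entropy (margXY P B) - entropy (margX P B))
    - (entropy (margXY P (A ∪ B)) - entropy (margX P (A ∪ B)))

/-- The index set `[s]` (`{0,…,s−1}` in 0-based indexing) inside `Fin k`. -/
def idx (k s : ℕ) : Finset (Fin k) := Finset.univ.filter (fun i => (i : ℕ) < s)

/-- The index set `[a+1 : b]` (`{a,…,b−1}` in 0-based indexing) inside `Fin k`. -/
def idxR (k a b : ℕ) : Finset (Fin k) :=
  Finset.univ.filter (fun i => a ≤ (i : ℕ) ∧ (i : ℕ) < b)

/-- Output pmf `P_{Y_k}`. -/
def outP {K : ℕ} (W : (Fin K → 𝓧) → 𝓨 → ℝ) (x0 : 𝓧) (pX : 𝓧 → ℝ) (k : ℕ)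
    (y : 𝓨) : ℝ :=
  ∑ x : Fin k → 𝓧, joint W x0 pX k (x, y)

end RAC

open RAC

namespace RAC

section Pushforward

variable {α β γ : Type*} [Fintype α]

def push (q : α → ℝ) (F : α → β) (b : β) : ℝ := ∑ a, if F a = b then q a else 0

lemma push_nonneg {q : α → ℝ} (hq : ∀ a, 0 ≤ q a) (F : α → β) (b : β) : 0 ≤ push q F b :=
  sum_nonneg fun a _ => by split_ifs <;> simp [hq a]

lemma push_id (q : α → ℝ) : push q id = q := by
  funext b
  simp [push]

lemma sum_push [Fintype β] (q : α → ℝ) (F : α → β) : ∑ b, push q F b = ∑ a, q a := by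
  simp only [push]
  rw [Finset.sum_comm]
  simp

lemma push_push [Fintype β] (q : α → ℝ) (F : α → β) (G : β → γ) :
    push (push q F) G = push q (G ∘ F) := by
  funext c
  calc ∑ b, (if G b = c then push q F b else 0)
      = ∑ b, ∑ a, if F a = b then (if G b = c then q a else 0) else 0 := by
        refine sum_congr rfl fun b _ => ?_
        split_ifs <;> simp [push, *]
    _ = push q (G ∘ F) c := by
        rw [sum_comm]
        simp [push]

lemma le_push_apply {q : α → ℝ} (hq : ∀ a, 0 ≤ q a) (F : α → β) (a : α) :
    q a ≤ push q F (F a) := by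
  have := single_le_sum (f := fun a' => if F a' = F a then q a' else 0)
    (fun a' _ => by split_ifs <;> simp [hq a']) (mem_univ a)
  simpa [push] using this

lemma push_apply_le_of_factor {q : α → ℝ} (hq : ∀ a, 0 ≤ q a) {F : α → β} {G : α → γ}
    (hFG : ∀ a a', F a = F a' → G a = G a') (a : α) :
    push q F (F a) ≤ push q G (G a) :=
  sum_le_sum fun a' _ => by
    by_cases h : F a' = F a
    · simp [h, hFG a' a h]
    · split_ifs <;> simp [hq a']

lemma push_apply_eq_of_fiber {q : α → ℝ} {F : α → β} {G : α → γ}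
    (hFG : ∀ a a', F a = F a' ↔ G a = G a') (a : α) :
    push q F (F a) = push q G (G a) :=
  sum_congr rfl fun a' _ => by simp only [hFG]

lemma push_comp_of_invariant (q : α → ℝ) (F : α → β) (σ : Equiv.Perm α)
    (hq : ∀ a, q (σ a) = q a) : push q (F ∘ σ) = push q F := by
  funext b
  simp only [push, Function.comp]
  exact Fintype.sum_equiv σ _ _ fun a => by rw [hq]

lemma entropy_push [Fintype β] (q : α → ℝ) (F : α → β) :
    entropy (push q F) = ∑ a, -(q a * Real.log (push q F (F a))) := by
  have hterm : ∀ b, Real.negMulLog (push q F b)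
      = ∑ a, if F a = b then -(q a * Real.log (push q F b)) else 0 := by
    intro b
    rw [Real.negMulLog]
    generalize Real.log (push q F b) = L
    simp only [push, neg_mul, sum_mul, ← sum_neg_distrib]
    exact sum_congr rfl fun a _ => by split_ifs <;> simp
  simp only [entropy, hterm]
  rw [sum_comm]
  simp

lemma entropy_push_congr [Fintype β] [Fintype γ] (q : α → ℝ) {F : α → β} {G : α → γ}
    (hFG : ∀ a a', F a = F a' ↔ G a = G a') : entropy (push q F) = entropy (push q G) := by
  simp only [entropy_push, push_apply_eq_of_fiber hFG]

end Pushforward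

section Marginals

variable {Ω α β γ : Type*}

lemma push_snd_apply [Fintype α] [Fintype γ] (g : α × γ → ℝ) (c : γ) :
    push g Prod.snd c = ∑ a, g (a, c) := by
  simp [push, Fintype.sum_prod_type]

lemma push_fst_apply [Fintype α] [Fintype γ] (g : α × γ → ℝ) (a : α) :
    push g Prod.fst a = ∑ c, g (a, c) := by
  simp only [push, Fintype.sum_prod_type]
  rw [sum_comm]
  simp

lemma sum_push_pair_apply [Fintype Ω] [Fintype α] [Fintype β] (q : Ω → ℝ) (F : Ω → α)
    (G : Ω → β) (a : α) :
    ∑ b, push q (fun ω => (F ω, G ω)) (a, b) = push q F a := by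
  rw [← push_fst_apply, push_push]
  rfl

lemma sum_push_triple_apply [Fintype Ω] [Fintype γ] (q : Ω → ℝ) (F : Ω → α) (G : Ω → β)
    (H : Ω → γ) (a : α) (b : β) :
    ∑ c, push q (fun ω => (F ω, G ω, H ω)) (a, b, c) = push q (fun ω => (F ω, G ω)) (a, b) := by
  simp only [push, Prod.mk.injEq]
  rw [sum_comm]
  refine sum_congr rfl fun ω _ => ?_
  by_cases h : F ω = a ∧ G ω = b
  · simp [h]
  · rw [if_neg h]
    exact sum_eq_zero fun c _ => if_neg fun h' => h ⟨h'.1, h'.2.1⟩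

lemma push_mul_apply [Fintype α] [Fintype β] (f : α → ℝ) (g : β → ℝ) (G : β → γ) (a : α) (c : γ) :
    push (fun p : α × β => f p.1 * g p.2) (fun p => (p.1, G p.2)) (a, c) = f a * push g G c := by
  simp only [push, Prod.mk.injEq, Fintype.sum_prod_type, mul_sum]
  rw [sum_eq_single a (fun a' _ ha' => by simp [ha']) (by simp)]
  exact sum_congr rfl fun b _ => by split_ifs <;> simp_all

end Marginals

section Gibbs

open InformationTheory

lemma mul_log_div_sub_sub_eq_mul_klFun {x y : ℝ} (hy : 0 < y) :
    x * Real.log (x / y) - (x - y) = y * klFun (x / y) := by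
  rw [klFun]; field_simp; ring

lemma sub_le_mul_log_div {x y : ℝ} (hx : 0 ≤ x) (hy : 0 ≤ y) (hxy : 0 < x → 0 < y) :
    x - y ≤ x * Real.log (x / y) := by
  rcases hx.eq_or_lt with rfl | hx
  · simpa using hy
  have hy := hxy hx
  have := mul_nonneg hy.le (klFun_nonneg (div_nonneg hx.le hy.le))
  linarith [mul_log_div_sub_sub_eq_mul_klFun (x := x) hy]

lemma eq_of_mul_log_div_eq_sub {x y : ℝ} (hx : 0 ≤ x) (hy : 0 ≤ y) (hxy : 0 < x → 0 < y)
    (h : x * Real.log (x / y) = x - y) : x = y := by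
  rcases hx.eq_or_lt with rfl | hx
  · simp at h; linarith
  have hy := hxy hx
  have hkl : y * klFun (x / y) = 0 := by linarith [mul_log_div_sub_sub_eq_mul_klFun (x := x) hy]
  rw [mul_eq_zero, or_iff_right hy.ne', klFun_eq_zero_iff (div_nonneg hx.le hy.le),
    div_eq_one_iff_eq hy.ne'] at hkl
  exact hkl

end Gibbs

section CondIndep

variable {α β γ : Type*} [Fintype α] [Fintype β] [Fintype γ]

/-- `q(a | c) q(b | c) q(c)` (and `0` where `q(c) = 0`): the law with the same pair marginals
under which the first two coordinates are conditionally independent given the third. -/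
def condProduct (q : α × β × γ → ℝ) (p : α × β × γ) : ℝ :=
  push q (fun u => (u.1, u.2.2)) (p.1, p.2.2) * push q (fun u => (u.2.1, u.2.2)) (p.2.1, p.2.2)
    / push q (fun u => u.2.2) p.2.2

variable {q : α × β × γ → ℝ}

lemma condProduct_nonneg (hq : ∀ p, 0 ≤ q p) (p : α × β × γ) : 0 ≤ condProduct q p :=
  div_nonneg (mul_nonneg (push_nonneg hq _ _) (push_nonneg hq _ _)) (push_nonneg hq _ _)

lemma push_marginals_pos (hq : ∀ p, 0 ≤ q p) {p : α × β × γ} (hp : 0 < q p) :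
    0 < push q (fun u => (u.1, u.2.2)) (p.1, p.2.2)
      ∧ 0 < push q (fun u => (u.2.1, u.2.2)) (p.2.1, p.2.2)
      ∧ 0 < push q (fun u => u.2.2) p.2.2 := by
  have hAC := hp.trans_le (le_push_apply hq (fun u => (u.1, u.2.2)) p)
  refine ⟨hAC, hp.trans_le (le_push_apply hq (fun u => (u.2.1, u.2.2)) p),
    hAC.trans_le (push_apply_le_of_factor hq (fun _ _ h => (Prod.ext_iff.mp h).2) p)⟩

lemma condProduct_pos (hq : ∀ p, 0 ≤ q p) {p : α × β × γ} (hp : 0 < q p) :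
    0 < condProduct q p := by
  obtain ⟨hAC, hBC, hC⟩ := push_marginals_pos hq hp
  exact div_pos (mul_pos hAC hBC) hC

lemma sum_condProduct : ∑ p, condProduct q p = ∑ p, q p := by
  have hA : ∀ c, ∑ a, push q (fun u => (u.1, u.2.2)) (a, c) = push q (fun u => u.2.2) c :=
    fun c => by rw [← push_snd_apply, push_push]; rfl
  have hB : ∀ c, ∑ b, push q (fun u => (u.2.1, u.2.2)) (b, c) = push q (fun u => u.2.2) c :=
    fun c => by rw [← push_snd_apply, push_push]; rfl
  calc ∑ p, condProduct q p
      = ∑ c, (∑ a, push q (fun u => (u.1, u.2.2)) (a, c))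
          * (∑ b, push q (fun u => (u.2.1, u.2.2)) (b, c)) / push q (fun u => u.2.2) c := by
        simp only [Fintype.sum_prod_type, condProduct, sum_mul, mul_sum, sum_div]
        rw [sum_comm]
        conv_lhs => enter [2, b]; rw [sum_comm]
        exact sum_comm
    _ = ∑ p, q p := by
        simp only [hA, hB, mul_self_div_self]
        exact sum_push q _

lemma entropy_marginals_sub_eq (hq : ∀ p, 0 ≤ q p) :
    entropy (push q (fun u => (u.1, u.2.2))) + entropy (push q (fun u => (u.2.1, u.2.2)))
        - (entropy q + entropy (push q (fun u => u.2.2)))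
      = ∑ p, q p * Real.log (q p / condProduct q p) := by
  rw [show entropy q = entropy (push q id) by rw [push_id]]
  simp only [entropy_push, ← sum_add_distrib, ← sum_sub_distrib]
  refine sum_congr rfl fun p _ => ?_
  rcases (hq p).eq_or_lt with hp | hp
  · simp [← hp]
  obtain ⟨hAC, hBC, hC⟩ := push_marginals_pos hq hp
  rw [condProduct, Real.log_div hp.ne' (by positivity), Real.log_div (by positivity) hC.ne',
    Real.log_mul hAC.ne' hBC.ne', push_id, id]
  ring

lemma entropy_add_entropy_le (hq : ∀ p, 0 ≤ q p) :
    entropy q + entropy (push q (fun u => u.2.2))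
      ≤ entropy (push q (fun u => (u.1, u.2.2))) + entropy (push q (fun u => (u.2.1, u.2.2))) := by
  have hgibbs : ∑ p, (q p - condProduct q p) ≤ ∑ p, q p * Real.log (q p / condProduct q p) :=
    sum_le_sum fun p _ => sub_le_mul_log_div (hq p) (condProduct_nonneg hq p)
      (condProduct_pos hq)
  rw [sum_sub_distrib, sum_condProduct, sub_self, ← entropy_marginals_sub_eq hq] at hgibbs
  linarith

lemma eq_condProduct_of_entropy_add_eq (hq : ∀ p, 0 ≤ q p)
    (h : entropy q + entropy (push q (fun u => u.2.2))
      = entropy (push q (fun u => (u.1, u.2.2))) + entropy (push q (fun u => (u.2.1, u.2.2))))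
    (p : α × β × γ) : q p = condProduct q p := by
  have hgap : ∑ p, (q p * Real.log (q p / condProduct q p) - (q p - condProduct q p)) = 0 := by
    rw [sum_sub_distrib, ← entropy_marginals_sub_eq hq, sum_sub_distrib, sum_condProduct]
    linarith
  rw [sum_eq_zero_iff_of_nonneg fun p _ => sub_nonneg.mpr <|
    sub_le_mul_log_div (hq p) (condProduct_nonneg hq p) (condProduct_pos hq)] at hgap
  exact eq_of_mul_log_div_eq_sub (hq p) (condProduct_nonneg hq p) (condProduct_pos hq)
    (sub_eq_zero.mp (hgap p (mem_univ p)))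

end CondIndep

/-- Equality case of Sedrakyan's inequality `(∑ r)² ≤ (∑ t) · ∑ r² / t`. -/
lemma eq_mul_of_sum_sq_div_eq {ι : Type*} [Fintype ι] {r t : ι → ℝ} {c : ℝ}
    (ht0 : ∀ i, 0 ≤ t i) (hrt : ∀ i, t i = 0 → r i = 0) (ht : ∑ i, t i = 1)
    (hr : ∑ i, r i = c) (hsq : ∑ i, r i ^ 2 / t i = c ^ 2) (i : ι) : r i = c * t i := by
  have hterm : ∀ i, (r i - c * t i) ^ 2 / t i = r i ^ 2 / t i - 2 * c * r i + c ^ 2 * t i := by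
    intro i
    by_cases hti : t i = 0
    · simp [hti, hrt i hti]
    · field_simp; ring
  have hsum : ∑ i, (r i - c * t i) ^ 2 / t i = 0 := by
    simp only [hterm, sum_add_distrib, sum_sub_distrib, ← mul_sum, hsq, hr, ht]
    ring
  rw [sum_eq_zero_iff_of_nonneg fun i _ => div_nonneg (sq_nonneg _) (ht0 i)] at hsum
  by_cases hti : t i = 0
  · simp [hti, hrt i hti]
  · have := hsum i (mem_univ i)
    rw [div_eq_zero_iff, or_iff_left hti, sq_eq_zero_iff, sub_eq_zero] at this
    exact this

section IidProduct

variable {ι α : Type*} [Fintype ι] [DecidableEq ι] [Fintype α] {p : α → ℝ}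

lemma sum_ite_forall_eq_prod (hp1 : ∑ a, p a = 1) (S : Finset ι) (v : ι → α) :
    ∑ x : ι → α, (if ∀ i ∈ S, x i = v i then ∏ i, p (x i) else 0) = ∏ i ∈ S, p (v i) := by
  have hfactor : ∀ x : ι → α, (if ∀ i ∈ S, x i = v i then ∏ i, p (x i) else 0)
      = ∏ i, if i ∈ S then (if x i = v i then p (x i) else 0) else p (x i) := by
    intro x
    split_ifs with h
    · exact prod_congr rfl fun i _ => by split_ifs <;> simp_all
    · push Not at h
      obtain ⟨i, hiS, hi⟩ := h
      exact (prod_eq_zero (mem_univ i) (by simp [hiS, hi])).symm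
  rw [sum_congr rfl fun x _ => hfactor x,
    ← Fintype.prod_sum fun i a => if i ∈ S then (if a = v i then p a else 0) else p a,
    ← Fintype.prod_ite_mem S fun i => p (v i)]
  exact prod_congr rfl fun i _ => by split_ifs <;> simp [hp1]

lemma sum_prod_mul_apply (hp1 : ∑ a, p a = 1) (g : α → ℝ) (i : ι) :
    ∑ x : ι → α, (∏ j, p (x j)) * g (x i) = ∑ a, p a * g a := by
  calc ∑ x : ι → α, (∏ j, p (x j)) * g (x i)
      = ∑ a, g a * ∑ x : ι → α, if ∀ j ∈ ({i} : Finset ι), x j = a then ∏ j, p (x j) else 0 := by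
        simp only [mem_singleton, forall_eq, mul_sum, mul_ite, mul_zero]
        rw [sum_comm]
        exact sum_congr rfl fun x _ => by rw [sum_ite_eq]; simp [mul_comm]
    _ = ∑ a, p a * g a := by
        simp only [sum_ite_forall_eq_prod hp1, prod_singleton, mul_comm]

lemma entropy_pi_prod (hp1 : ∑ a, p a = 1) :
    entropy (fun x : ι → α => ∏ i, p (x i)) = Fintype.card ι * entropy p := by
  have hterm : ∀ x : ι → α,
      Real.negMulLog (∏ i, p (x i)) = ∑ i, -((∏ j, p (x j)) * Real.log (p (x i))) := by
    intro x
    by_cases h0 : ∏ i, p (x i) = 0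
    · simp [h0]
    · rw [Real.negMulLog, Real.log_prod fun i _ => (prod_ne_zero_iff.mp h0) i (mem_univ i),
        mul_sum]
      exact sum_congr rfl fun i _ => by ring
  simp only [entropy, hterm]
  rw [sum_comm]
  simp only [sum_neg_distrib, sum_prod_mul_apply hp1 fun a => Real.log (p a), Real.negMulLog,
    neg_mul, sum_const, card_univ, nsmul_eq_mul, mul_neg]

lemma push_prod_apply_eval (hp1 : ∑ a, p a = 1) (c : ι) (a : α) :
    push (fun x : ι → α => ∏ i, p (x i)) (fun x => x c) a = p a := by
  simpa [push] using sum_ite_forall_eq_prod hp1 {c} fun _ => a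

lemma push_prod_apply_eval_pair (hp1 : ∑ a, p a = 1) {c d : ι} (hcd : c ≠ d) (a b : α) :
    push (fun x : ι → α => ∏ i, p (x i)) (fun x => (x c, x d)) (a, b) = p a * p b := by
  simpa [push, hcd, hcd.symm, Prod.ext_iff, and_comm] using
    sum_ite_forall_eq_prod hp1 {c, d} fun i => if i = c then a else b

lemma push_prod_restrict [Nonempty α] (hp1 : ∑ a, p a = 1) (S : Finset ι) (u : S → α) :
    push (fun x : ι → α => ∏ i, p (x i)) (fun x (i : S) => x i) u = ∏ i, p (u i) := by
  let v : ι → α := fun i => if h : i ∈ S then u ⟨i, h⟩ else Classical.arbitrary α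
  have hv : ∀ x : ι → α, ((fun i : S => x i) = u) ↔ ∀ i ∈ S, x i = v i := by
    intro x
    simp only [funext_iff, Subtype.forall, v]
    exact forall₂_congr fun i hi => by rw [dif_pos hi]
  simp only [push, hv, sum_ite_forall_eq_prod hp1]
  rw [← prod_coe_sort]
  simp [v]

end IidProduct

section Restriction

variable {𝓧 𝓨 : Type*} {k : ℕ}

def restrictY (S : Finset (Fin k)) (ω : (Fin k → 𝓧) × 𝓨) : (S → 𝓧) × 𝓨 :=
  (fun i => ω.1 i, ω.2)

lemma restrictY_eq_iff {S : Finset (Fin k)} {ω ω' : (Fin k → 𝓧) × 𝓨} :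
    restrictY S ω = restrictY S ω' ↔ (∀ i ∈ S, ω.1 i = ω'.1 i) ∧ ω.2 = ω'.2 := by
  simp [restrictY, Prod.ext_iff, funext_iff]

lemma eval_restrictY_eq_iff (c : Fin k) (S : Finset (Fin k)) {ω ω' : (Fin k → 𝓧) × 𝓨} :
    (ω.1 c, restrictY S ω) = (ω'.1 c, restrictY S ω')
      ↔ restrictY (insert c S) ω = restrictY (insert c S) ω' := by
  rw [Prod.mk.injEq, restrictY_eq_iff, restrictY_eq_iff, forall_mem_insert, and_assoc]

lemma eval_eval_restrictY_eq_iff (c₁ c₂ : Fin k) (S : Finset (Fin k))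
    {ω ω' : (Fin k → 𝓧) × 𝓨} :
    (ω.1 c₂, ω.1 c₁, restrictY S ω) = (ω'.1 c₂, ω'.1 c₁, restrictY S ω')
      ↔ restrictY (insert c₂ (insert c₁ S)) ω = restrictY (insert c₂ (insert c₁ S)) ω' := by
  rw [Prod.mk.injEq, eval_restrictY_eq_iff, ← Prod.mk.injEq, eval_restrictY_eq_iff]

variable [Fintype 𝓧] [Fintype 𝓨]

lemma margXY_eq_push (P : (Fin k → 𝓧) × 𝓨 → ℝ) (S : Finset (Fin k)) :
    margXY P S = push P (restrictY S) := by
  funext uy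
  simp only [margXY, push, Fintype.sum_prod_type, restrictY, Prod.ext_iff, funext_iff]
  refine sum_congr rfl fun x _ => ?_
  by_cases h : ∀ i : S, x i = uy.1 i
  · simp [h]
  · simp only [Subtype.forall] at h
    simp [h]

lemma margX_eq_push (P : (Fin k → 𝓧) × 𝓨 → ℝ) (S : Finset (Fin k)) :
    margX P S = push P (fun ω (i : S) => ω.1 i) := by
  funext u
  simp only [margX, push, Fintype.sum_prod_type, funext_iff]

end Restriction

section Exchangeable

variable {𝓧 𝓨 : Type*} [Fintype 𝓧] [Fintype 𝓨] {k : ℕ} {P : (Fin k → 𝓧) × 𝓨 → ℝ}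

lemma entropy_margXY_insert_insert_sub (c₁ c₂ : Fin k) (S : Finset (Fin k)) :
    entropy (margXY P (insert c₂ (insert c₁ S))) + entropy (margXY P S)
        - (entropy (margXY P (insert c₂ S)) + entropy (margXY P (insert c₁ S)))
      = entropy (push P fun ω => (ω.1 c₂, ω.1 c₁, restrictY S ω))
          + entropy (push (push P fun ω => (ω.1 c₂, ω.1 c₁, restrictY S ω)) fun u => u.2.2)
        - (entropy (push (push P fun ω => (ω.1 c₂, ω.1 c₁, restrictY S ω)) fun u => (u.1, u.2.2))
          + entropy (push (push P fun ω => (ω.1 c₂, ω.1 c₁, restrictY S ω))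
              fun u => (u.2.1, u.2.2))) := by
  simp only [push_push, Function.comp_def, margXY_eq_push]
  rw [entropy_push_congr P fun _ _ => eval_eval_restrictY_eq_iff c₁ c₂ S,
    entropy_push_congr P (G := restrictY (insert c₂ S)) fun _ _ => eval_restrictY_eq_iff c₂ S,
    entropy_push_congr P (G := restrictY (insert c₁ S)) fun _ _ => eval_restrictY_eq_iff c₁ S]

lemma entropy_margXY_insert_insert_add_le (hP0 : ∀ ω, 0 ≤ P ω) (c₁ c₂ : Fin k)
    (S : Finset (Fin k)) :
    entropy (margXY P (insert c₂ (insert c₁ S))) + entropy (margXY P S)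
      ≤ entropy (margXY P (insert c₂ S)) + entropy (margXY P (insert c₁ S)) := by
  rw [← sub_nonpos, entropy_margXY_insert_insert_sub, sub_nonpos]
  exact entropy_add_entropy_le (push_nonneg hP0 _)

lemma push_comp_perm (hP : ∀ (σ : Equiv.Perm (Fin k)) x y, P (x ∘ σ, y) = P (x, y))
    {β : Type*} (σ : Equiv.Perm (Fin k)) (F : (Fin k → 𝓧) × 𝓨 → β) :
    push P (fun ω => F (ω.1 ∘ σ, ω.2)) = push P F :=
  push_comp_of_invariant P F ((σ.symm.arrowCongr (Equiv.refl 𝓧)).prodCongr (Equiv.refl 𝓨))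
    fun ω => hP σ ω.1 ω.2

lemma push_eval_restrictY_swap (hP : ∀ (σ : Equiv.Perm (Fin k)) x y, P (x ∘ σ, y) = P (x, y))
    {c₁ c₂ : Fin k} {S : Finset (Fin k)} (h₁ : c₁ ∉ S) (h₂ : c₂ ∉ S) :
    push P (fun ω => (ω.1 c₂, restrictY S ω)) = push P (fun ω => (ω.1 c₁, restrictY S ω)) := by
  rw [← push_comp_perm hP (Equiv.swap c₁ c₂) fun ω => (ω.1 c₁, restrictY S ω)]
  congr 1
  funext ω
  simp only [Function.comp, Equiv.swap_apply_left, restrictY, Prod.mk.injEq, true_and,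
    and_true]
  funext i
  rw [Equiv.swap_apply_of_ne_of_ne (ne_of_mem_of_not_mem i.2 h₁)
    (ne_of_mem_of_not_mem i.2 h₂)]

lemma entropy_margXY_insert_swap (hP : ∀ (σ : Equiv.Perm (Fin k)) x y, P (x ∘ σ, y) = P (x, y))
    {c₁ c₂ : Fin k} {S : Finset (Fin k)} (h₁ : c₁ ∉ S) (h₂ : c₂ ∉ S) :
    entropy (margXY P (insert c₂ S)) = entropy (margXY P (insert c₁ S)) := by
  rw [margXY_eq_push, margXY_eq_push,
    ← entropy_push_congr P fun _ _ => eval_restrictY_eq_iff c₂ S,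
    ← entropy_push_congr P fun _ _ => eval_restrictY_eq_iff c₁ S,
    push_eval_restrictY_swap hP h₁ h₂]

variable {pX : 𝓧 → ℝ}

lemma push_eval_apply (hPX : push P Prod.fst = fun x => ∏ i, pX (x i)) (hp1 : ∑ a, pX a = 1)
    (c : Fin k) (a : 𝓧) : push P (fun ω => ω.1 c) a = pX a := by
  rw [show (fun ω : (Fin k → 𝓧) × 𝓨 => ω.1 c) = (fun x => x c) ∘ Prod.fst from rfl,
    ← push_push, hPX, push_prod_apply_eval hp1]

lemma push_eval_pair_apply (hPX : push P Prod.fst = fun x => ∏ i, pX (x i))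
    (hp1 : ∑ a, pX a = 1) {c₁ c₂ : Fin k} (hc : c₁ ≠ c₂) (a b : 𝓧) :
    push P (fun ω => (ω.1 c₁, ω.1 c₂)) (a, b) = pX a * pX b := by
  rw [show (fun ω : (Fin k → 𝓧) × 𝓨 => (ω.1 c₁, ω.1 c₂)) = (fun x => (x c₁, x c₂)) ∘ Prod.fst
    from rfl, ← push_push, hPX, push_prod_apply_eval_pair hp1 hc]

lemma sum_eq_one_of_push_fst (hPX : push P Prod.fst = fun x => ∏ i, pX (x i))
    (hp1 : ∑ a, pX a = 1) : ∑ ω, P ω = 1 := by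
  rw [← sum_push P Prod.fst, hPX, ← Fintype.prod_sum fun _ a => pX a]
  simp [hp1]

lemma push_eval_eval_restrictY_eq_div (hP0 : ∀ ω, 0 ≤ P ω)
    (hP : ∀ (σ : Equiv.Perm (Fin k)) x y, P (x ∘ σ, y) = P (x, y))
    {c₁ c₂ : Fin k} {S : Finset (Fin k)} (h₁ : c₁ ∉ S) (h₂ : c₂ ∉ S)
    (heq : entropy (margXY P (insert c₂ (insert c₁ S))) + entropy (margXY P S)
      = entropy (margXY P (insert c₂ S)) + entropy (margXY P (insert c₁ S)))
    (a b : 𝓧) (z : (S → 𝓧) × 𝓨) :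
    push P (fun ω => (ω.1 c₂, ω.1 c₁, restrictY S ω)) (a, b, z)
      = push P (fun ω => (ω.1 c₁, restrictY S ω)) (a, z)
        * push P (fun ω => (ω.1 c₁, restrictY S ω)) (b, z) / push P (restrictY S) z := by
  have hgap := entropy_margXY_insert_insert_sub (P := P) c₁ c₂ S
  rw [heq, sub_self, eq_comm, sub_eq_zero] at hgap
  rw [eq_condProduct_of_entropy_add_eq (push_nonneg hP0 _) hgap]
  simp only [condProduct, push_push, Function.comp_def]
  rw [push_eval_restrictY_swap hP h₁ h₂]

lemma push_eval_restrictY_eq_mul (hP0 : ∀ ω, 0 ≤ P ω)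
    (hP : ∀ (σ : Equiv.Perm (Fin k)) x y, P (x ∘ σ, y) = P (x, y))
    (hPX : push P Prod.fst = fun x => ∏ i, pX (x i)) (hp1 : ∑ a, pX a = 1)
    {c₁ c₂ : Fin k} (hc : c₁ ≠ c₂) {S : Finset (Fin k)} (h₁ : c₁ ∉ S) (h₂ : c₂ ∉ S)
    (heq : entropy (margXY P (insert c₂ (insert c₁ S))) + entropy (margXY P S)
      = entropy (margXY P (insert c₂ S)) + entropy (margXY P (insert c₁ S)))
    (a : 𝓧) (z : (S → 𝓧) × 𝓨) :
    push P (fun ω => (ω.1 c₁, restrictY S ω)) (a, z) = pX a * push P (restrictY S) z := by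
  have hmarg : ∀ z, ∑ a, push P (fun ω => (ω.1 c₁, restrictY S ω)) (a, z)
      = push P (restrictY S) z := fun z => by
    rw [← push_snd_apply, push_push]
    rfl
  refine eq_mul_of_sum_sq_div_eq (r := fun z => push P (fun ω => (ω.1 c₁, restrictY S ω)) (a, z))
    (push_nonneg hP0 _) (fun z hz => ?_) ?_ ?_ ?_ z
  · rw [← hmarg] at hz
    exact (sum_eq_zero_iff_of_nonneg fun _ _ => push_nonneg hP0 _ _).mp hz a (mem_univ a)
  · rw [sum_push]
    exact sum_eq_one_of_push_fst hPX hp1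
  · rw [sum_push_pair_apply, push_eval_apply hPX hp1]
  · calc ∑ z, push P (fun ω => (ω.1 c₁, restrictY S ω)) (a, z) ^ 2 / push P (restrictY S) z
        = ∑ z, push P (fun ω => (ω.1 c₂, ω.1 c₁, restrictY S ω)) (a, a, z) := by
          simp only [push_eval_eval_restrictY_eq_div hP0 hP h₁ h₂ heq, sq]
      _ = pX a ^ 2 := by
          rw [sum_push_triple_apply, push_eval_pair_apply hPX hp1 hc.symm, sq]

lemma margXY_insert_insert_mul_eq (hP0 : ∀ ω, 0 ≤ P ω)
    (hP : ∀ (σ : Equiv.Perm (Fin k)) x y, P (x ∘ σ, y) = P (x, y))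
    (hPX : push P Prod.fst = fun x => ∏ i, pX (x i)) (hp1 : ∑ a, pX a = 1)
    {c₁ c₂ : Fin k} (hc : c₁ ≠ c₂) {S : Finset (Fin k)} (h₁ : c₁ ∉ S) (h₂ : c₂ ∉ S)
    (heq : entropy (margXY P (insert c₂ (insert c₁ S))) + entropy (margXY P S)
      = entropy (margXY P (insert c₂ S)) + entropy (margXY P (insert c₁ S)))
    (ω : (Fin k → 𝓧) × 𝓨) :
    margXY P (insert c₂ (insert c₁ S)) (restrictY _ ω) * push P Prod.snd ω.2
      = margXY P (insert c₁ S) (restrictY _ ω) * margXY P {c₂} (restrictY _ ω) := by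
  have hr := push_eval_restrictY_eq_mul hP0 hP hPX hp1 hc h₁ h₂ heq
  have hXXY : margXY P (insert c₂ (insert c₁ S)) (restrictY _ ω)
      = pX (ω.1 c₂) * pX (ω.1 c₁) * push P (restrictY S) (restrictY S ω) := by
    rw [margXY_eq_push, push_apply_eq_of_fiber fun _ _ => (eval_eval_restrictY_eq_iff c₁ c₂ S).symm,
      push_eval_eval_restrictY_eq_div hP0 hP h₁ h₂ heq, hr, hr, mul_mul_mul_comm, mul_div_assoc,
      mul_self_div_self]
  have hXY : margXY P (insert c₁ S) (restrictY _ ω)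
      = pX (ω.1 c₁) * push P (restrictY S) (restrictY S ω) := by
    rw [margXY_eq_push, push_apply_eq_of_fiber fun _ _ => (eval_restrictY_eq_iff c₁ S).symm, hr]
  have hY : margXY P {c₂} (restrictY _ ω) = pX (ω.1 c₂) * push P Prod.snd ω.2 := by
    have hfun : push P (fun ω => (ω.1 c₂, ω.2))
        = push (push P fun ω => (ω.1 c₂, restrictY S ω)) fun u => (u.1, u.2.2) := by
      rw [push_push]
      rfl
    rw [margXY_eq_push, push_apply_eq_of_fiber (G := fun ω => (ω.1 c₂, ω.2))
      fun _ _ => by simp only [restrictY_eq_iff, Prod.mk.injEq, mem_singleton, forall_eq],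
      hfun, push_eval_restrictY_swap hP h₁ h₂,
      show push P (fun ω => (ω.1 c₁, restrictY S ω)) = fun p => pX p.1 * push P (restrictY S) p.2
        from funext fun p => hr p.1 p.2, push_mul_apply, push_push]
    rfl
  rw [hXXY, hXY, hY]
  ring

end Exchangeable

section Indices

variable {k : ℕ}

lemma mem_idx {m : ℕ} {i : Fin k} : i ∈ idx k m ↔ (i : ℕ) < m := by
  simp [idx]

lemma idx_succ {m : ℕ} (hm : m < k) : idx k (m + 1) = insert ⟨m, hm⟩ (idx k m) := by
  ext i
  simp only [mem_idx, mem_insert, Fin.ext_iff]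
  omega

lemma idxR_succ {m : ℕ} (hm : m < k) : idxR k m (m + 1) = {⟨m, hm⟩} := by
  ext i
  simp only [idxR, mem_filter, mem_univ, true_and, mem_singleton, Fin.ext_iff]
  omega

lemma notMem_idx {m : ℕ} {i : Fin k} (hi : m ≤ i) : i ∉ idx k m := by
  simpa [mem_idx] using hi

end Indices

lemma sub_succ_lt_sub_succ {f : ℕ → ℝ} {k : ℕ}
    (hf : ∀ n, n + 2 ≤ k → f (n + 2) + f n < 2 * f (n + 1)) {a b : ℕ} (hab : a < b)
    (hb : b < k) : f a - f (a + 1) < f b - f (b + 1) := by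
  induction b, hab using Nat.le_induction with
  | base => linarith [hf a (by omega)]
  | succ b hab ih => linarith [ih (by omega), hf b (by omega)]

section Channel

variable {𝓧 𝓨 : Type*} {K k : ℕ} {W : (Fin K → 𝓧) → 𝓨 → ℝ} {x0 : 𝓧} {pX : 𝓧 → ℝ}

lemma joint_nonneg (hW0 : ∀ x y, 0 ≤ W x y) (hp0 : ∀ a, 0 ≤ pX a)
    (ω : (Fin k → 𝓧) × 𝓨) : 0 ≤ joint W x0 pX k ω :=
  mul_nonneg (prod_nonneg fun _ _ => hp0 _) (hW0 _ _)

lemma redW_comp_perm (hperm : ∀ (σ : Equiv.Perm (Fin K)) x y, W (x ∘ σ) y = W x y)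
    (hkK : k ≤ K) (σ : Equiv.Perm (Fin k)) (x : Fin k → 𝓧) (y : 𝓨) :
    redW W x0 k (x ∘ σ) y = redW W x0 k x y := by
  unfold redW
  conv_rhs => rw [← hperm (σ.extendDomain (Fin.castLEquiv hkK))]
  congr 1
  funext i
  by_cases hi : (i : ℕ) < k
  · have hσ : σ.extendDomain (Fin.castLEquiv hkK) i = Fin.castLE hkK (σ ⟨i, hi⟩) :=
      Equiv.Perm.extendDomain_apply_subtype σ (Fin.castLEquiv hkK) (b := i) hi
    simp [hσ, hi]
  · have hσ : σ.extendDomain (Fin.castLEquiv hkK) i = i :=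
      Equiv.Perm.extendDomain_apply_not_subtype σ (Fin.castLEquiv hkK) (b := i) hi
    simp [hσ, hi]

lemma joint_comp_perm (hperm : ∀ (σ : Equiv.Perm (Fin K)) x y, W (x ∘ σ) y = W x y)
    (hkK : k ≤ K) (σ : Equiv.Perm (Fin k)) (x : Fin k → 𝓧) (y : 𝓨) :
    joint W x0 pX k (x ∘ σ, y) = joint W x0 pX k (x, y) := by
  simp only [joint, redW_comp_perm hperm hkK]
  congr 1
  exact Fintype.prod_equiv σ _ _ fun _ => rfl

variable [Fintype 𝓧] [Fintype 𝓨]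

lemma push_joint_fst (hW1 : ∀ x, ∑ y, W x y = 1) :
    push (joint W x0 pX k) Prod.fst = fun x => ∏ i, pX (x i) := by
  funext x
  simp [push_fst_apply, joint, redW, ← mul_sum, hW1]

lemma outP_eq_push : outP W x0 pX k = push (joint W x0 pX k) Prod.snd := by
  funext y
  rw [push_snd_apply]
  rfl

lemma entropy_margX_joint (hW1 : ∀ x, ∑ y, W x y = 1) (hp1 : ∑ a, pX a = 1)
    (S : Finset (Fin k)) : entropy (margX (joint W x0 pX k) S) = S.card * entropy pX := by
  have : Nonempty 𝓧 := ⟨x0⟩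
  rw [margX_eq_push, show push (joint W x0 pX k) (fun ω (i : S) => ω.1 i)
      = push (push (joint W x0 pX k) Prod.fst) (fun x (i : S) => x i) by rw [push_push]; rfl,
    push_joint_fst hW1, funext (push_prod_restrict hp1 S), entropy_pi_prod hp1,
    Fintype.card_coe]

lemma condMI_joint_singleton (hW1 : ∀ x, ∑ y, W x y = 1) (hp1 : ∑ a, pX a = 1)
    {c : Fin k} {B : Finset (Fin k)} (hc : c ∉ B) :
    condMI (joint W x0 pX k) {c} B
      = entropy (margXY (joint W x0 pX k) B) - entropy (margXY (joint W x0 pX k) (insert c B))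
        + entropy pX := by
  rw [condMI, ← insert_eq, entropy_margX_joint hW1 hp1, entropy_margX_joint hW1 hp1,
    card_insert_of_notMem hc]
  push_cast
  ring

lemma entropy_margXY_idx_add_lt (hW0 : ∀ x y, 0 ≤ W x y) (hW1 : ∀ x, ∑ y, W x y = 1)
    (hp0 : ∀ a, 0 ≤ pX a) (hp1 : ∑ a, pX a = 1)
    (hperm : ∀ (σ : Equiv.Perm (Fin K)) x y, W (x ∘ σ) y = W x y) (hkK : k ≤ K)
    {n : ℕ} (hn : n + 2 ≤ k)
    (hinter : ∃ y : 𝓨, 0 < outP W x0 pX k y ∧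
        ∃ x : Fin k → 𝓧,
          margXY (joint W x0 pX k) (idx k (n + 2)) ⟨fun i => x i.1, y⟩ / outP W x0 pX k y
            ≠ (margXY (joint W x0 pX k) (idx k (n + 1)) ⟨fun i => x i.1, y⟩ / outP W x0 pX k y)
              * (margXY (joint W x0 pX k) (idxR k (n + 1) (n + 2)) ⟨fun i => x i.1, y⟩
                  / outP W x0 pX k y)) :
    entropy (margXY (joint W x0 pX k) (idx k (n + 2)))
        + entropy (margXY (joint W x0 pX k) (idx k n))
      < 2 * entropy (margXY (joint W x0 pX k) (idx k (n + 1))) := by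
  have h₁ : (⟨n, by omega⟩ : Fin k) ∉ idx k n := notMem_idx le_rfl
  have h₂ : (⟨n + 1, hn⟩ : Fin k) ∉ idx k n := notMem_idx (Nat.le_succ n)
  have hc : (⟨n, by omega⟩ : Fin k) ≠ ⟨n + 1, hn⟩ := by simp [Fin.ext_iff]
  have hP0 := joint_nonneg (x0 := x0) (k := k) hW0 hp0
  have hP := joint_comp_perm (x0 := x0) (pX := pX) hperm hkK
  obtain ⟨y, hy, x, hne⟩ := hinter
  rw [idx_succ (by omega : n + 1 < k), idx_succ (by omega : n < k)] at hne ⊢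
  rw [idxR_succ (by omega : n + 1 < k), outP_eq_push] at hne
  rw [outP_eq_push] at hy
  have hle := entropy_margXY_insert_insert_add_le hP0 ⟨n, by omega⟩ ⟨n + 1, hn⟩ (idx k n)
  rw [entropy_margXY_insert_swap hP h₁ h₂] at hle
  refine lt_of_le_of_ne (by linarith) fun heq => hne ?_
  have hfac := margXY_insert_insert_mul_eq hP0 hP (push_joint_fst hW1) hp1 hc h₁ h₂
    (by rw [entropy_margXY_insert_swap hP h₁ h₂]; linarith) (x, y)
  simp only [restrictY] at hfac
  rw [div_mul_div_comm, ← hfac, mul_div_mul_right _ _ hy.ne']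

end Channel

end RAC

/-- Under permutation-invariance and interference, `I(X_i; Y_k | X_{[i−1]})`
is strictly increasing in `i`: for `1 ≤ i < j ≤ k ≤ K`,
`I(X_i; Y_k | X_{[i−1]}) < I(X_j; Y_k | X_{[j−1]})`. -/
theorem chain_rule_terms_strictly_increasing
    {𝓧 𝓨 : Type*} [Fintype 𝓧] [Fintype 𝓨]
    (K : ℕ)
    (W : (Fin K → 𝓧) → 𝓨 → ℝ) (x0 : 𝓧) (pX : 𝓧 → ℝ)
    (hW0 : ∀ x y, 0 ≤ W x y) (hW1 : ∀ x, ∑ y, W x y = 1)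
    (hp0 : ∀ a, 0 ≤ pX a) (hp1 : ∑ a, pX a = 1)
    (hperm : ∀ (σ : Equiv.Perm (Fin K)) (x : Fin K → 𝓧) (y : 𝓨), W (x ∘ σ) y = W x y)
    (hinter : ∀ k : ℕ, k ≤ K → ∀ s t : ℕ, 1 ≤ s → s < t → t ≤ k →
      ∃ y : 𝓨, 0 < outP W x0 pX k y ∧
        ∃ x : Fin k → 𝓧,
          margXY (joint W x0 pX k) (idx k t) ⟨fun i => x i.1, y⟩ / outP W x0 pX k y
            ≠ (margXY (joint W x0 pX k) (idx k s) ⟨fun i => x i.1, y⟩ / outP W x0 pX k y)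
              * (margXY (joint W x0 pX k) (idxR k s t) ⟨fun i => x i.1, y⟩
                  / outP W x0 pX k y)) :
    ∀ i j k : ℕ, (hi : 1 ≤ i) → (hij : i < j) → (hjk : j ≤ k) → (hkK : k ≤ K) →
      condMI (joint W x0 pX k) {(⟨i - 1, by omega⟩ : Fin k)} (idx k (i - 1))
        < condMI (joint W x0 pX k) {(⟨j - 1, by omega⟩ : Fin k)} (idx k (j - 1)) := by
  intro i j k hi hij hjk hkK
  have hcondMI : ∀ m (hm : m < k), condMI (joint W x0 pX k) {⟨m, hm⟩} (idx k m)
      = entropy (margXY (joint W x0 pX k) (idx k m))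
        - entropy (margXY (joint W x0 pX k) (idx k (m + 1))) + entropy pX := fun m hm => by
    rw [condMI_joint_singleton hW1 hp1 (notMem_idx le_rfl), ← idx_succ hm]
  have hdiff := sub_succ_lt_sub_succ (f := fun m => entropy (margXY (joint W x0 pX k) (idx k m)))
    (fun n hn => entropy_margXY_idx_add_lt hW0 hW1 hp0 hp1 hperm hkK hn
      (hinter k hkK (n + 1) (n + 2) (by omega) (by omega) hn))
    (show i - 1 < j - 1 by omega) (by omega)
  rw [hcondMI, hcondMI]
  linarith
end
end

section
/- Let 𝒳 and 𝒴 be finite nonempty types, let p be a pmf on 𝒳, and let A, B : 𝒳 × 𝒴 → ℝ be channels (for each x, A(x,·) and B(x,·) are nonnegative and sum to 1). Define output marginals a(y) := Σ_x p(x)A(x,y) and b(y) := Σ_x p(x)B(x,y). Assume that B(x,y) > 0 whenever p(x)A(x,y) > 0. Then Σ_{x,y} p(x)A(x,y)·ln( B(x,y)/b(y) ) ≤ Σ_{x,y} p(x)A(x,y)·ln( A(x,y)/a(y) ), where terms with p(x)A(x,y) = 0 are taken to be 0 (the right-hand side is the mutual information of the joint pmf p(x)A(x,y)). -/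
/-!
Let `P(x,y) = p(x)A(x,y)` and let `Q(x,y) = a(y)·p(x)B(x,y)/b(y)` be the output law `a` paired
with the posterior of the mismatched channel. On the support of `P`,
`ln(B/b) - ln(A/a) = ln(Q/P)`, so the difference of the two sides is `Σ P ln(Q/P)`, which by
`ln t ≤ t - 1` is at most `Σ Q - Σ P`. Summing over `x` first, `Σ_x Q(x,y) ≤ a(y) = Σ_x P(x,y)`.
-/

open Real Finset

lemma mul_log_div_le_sub {P Q : ℝ} (hP : 0 ≤ P) (hQ : 0 ≤ Q) (hPQ : 0 < P → 0 < Q) :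
    P * log (Q / P) ≤ Q - P := by
  rcases hP.eq_or_lt with rfl | hP
  · simpa using hQ
  calc P * log (Q / P) ≤ P * (Q / P - 1) :=
        mul_le_mul_of_nonneg_left (log_le_sub_one_of_pos (div_pos (hPQ hP) hP)) hP.le
    _ = Q - P := by field_simp

lemma sum_mul_log_div_nonpos {ι : Type*} {s : Finset ι} {P Q : ι → ℝ}
    (hP : ∀ i ∈ s, 0 ≤ P i) (hQ : ∀ i ∈ s, 0 ≤ Q i) (hPQ : ∀ i ∈ s, 0 < P i → 0 < Q i)
    (hmass : ∑ i ∈ s, Q i ≤ ∑ i ∈ s, P i) :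
    ∑ i ∈ s, P i * log (Q i / P i) ≤ 0 :=
  calc ∑ i ∈ s, P i * log (Q i / P i) ≤ ∑ i ∈ s, (Q i - P i) :=
        sum_le_sum fun i hi => mul_log_div_le_sub (hP i hi) (hQ i hi) (hPQ i hi)
    _ ≤ 0 := by rw [sum_sub_distrib]; linarith

lemma sum_mul_div_sum_le {ι : Type*} (s : Finset ι) (w : ι → ℝ) {c : ℝ} (hc : 0 ≤ c) :
    ∑ i ∈ s, w i * (c / ∑ j ∈ s, w j) ≤ c := by
  rw [← sum_mul]
  rcases eq_or_ne (∑ j ∈ s, w j) 0 with h | h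
  · simpa [h] using hc
  · rw [mul_div_cancel₀ _ h]

lemma log_div_eq_log_div_add_log {p α β a b : ℝ} (hp : p ≠ 0) (hα : α ≠ 0) (hβ : β ≠ 0)
    (ha : a ≠ 0) (hb : b ≠ 0) :
    log (β / b) = log (α / a) + log (p * β * (a / b) / (p * α)) := by
  rw [show p * β * (a / b) / (p * α) = (β / b) / (α / a) by field_simp,
    log_div (div_ne_zero hβ hb) (div_ne_zero hα ha)]
  ring

lemma mul_pos_of_mul_pos_left {p α β : ℝ} (hp : 0 ≤ p) (h : 0 < p * α) (hβ : 0 < β) :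
    0 < p * β :=
  mul_pos (hp.lt_of_ne' (left_ne_zero_of_mul h.ne')) hβ

def outputMarginal {ι κ : Type*} [Fintype ι] (p : ι → ℝ) (A : ι → κ → ℝ) (y : κ) : ℝ :=
  ∑ x, p x * A x y

noncomputable def mismatchedJoint {ι κ : Type*} [Fintype ι] (p : ι → ℝ) (A B : ι → κ → ℝ)
    (x : ι) (y : κ) : ℝ :=
  p x * B x y * (outputMarginal p A y / outputMarginal p B y)

section Channel

variable {ι κ : Type*} [Fintype ι] {p : ι → ℝ} {A B : ι → κ → ℝ}

lemma outputMarginal_nonneg (hp : ∀ x, 0 ≤ p x) (hA : ∀ x y, 0 ≤ A x y) (y : κ) :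
    0 ≤ outputMarginal p A y :=
  sum_nonneg fun x _ => mul_nonneg (hp x) (hA x y)

lemma mul_le_outputMarginal (hp : ∀ x, 0 ≤ p x) (hA : ∀ x y, 0 ≤ A x y) (x : ι) (y : κ) :
    p x * A x y ≤ outputMarginal p A y :=
  single_le_sum (f := fun x' => p x' * A x' y) (fun x' _ => mul_nonneg (hp x') (hA x' y))
    (mem_univ x)

lemma outputMarginal_pos (hp : ∀ x, 0 ≤ p x) (hA : ∀ x y, 0 ≤ A x y) {x : ι} {y : κ}
    (h : 0 < p x * A x y) : 0 < outputMarginal p A y :=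
  h.trans_le (mul_le_outputMarginal hp hA x y)

lemma mismatchedJoint_nonneg (hp : ∀ x, 0 ≤ p x) (hA : ∀ x y, 0 ≤ A x y)
    (hB : ∀ x y, 0 ≤ B x y) (x : ι) (y : κ) : 0 ≤ mismatchedJoint p A B x y :=
  mul_nonneg (mul_nonneg (hp x) (hB x y))
    (div_nonneg (outputMarginal_nonneg hp hA y) (outputMarginal_nonneg hp hB y))

lemma mismatchedJoint_pos (hp : ∀ x, 0 ≤ p x) (hA : ∀ x y, 0 ≤ A x y)
    (hB : ∀ x y, 0 ≤ B x y) (habs : ∀ x y, 0 < p x * A x y → 0 < B x y) {x : ι} {y : κ}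
    (h : 0 < p x * A x y) : 0 < mismatchedJoint p A B x y :=
  have hpB := mul_pos_of_mul_pos_left (hp x) h (habs x y h)
  mul_pos hpB (div_pos (outputMarginal_pos hp hA h) (outputMarginal_pos hp hB hpB))

lemma sum_mismatchedJoint_le (hp : ∀ x, 0 ≤ p x) (hA : ∀ x y, 0 ≤ A x y) (y : κ) :
    ∑ x, mismatchedJoint p A B x y ≤ outputMarginal p A y :=
  sum_mul_div_sum_le univ (fun x => p x * B x y) (outputMarginal_nonneg hp hA y)

lemma mul_log_div_outputMarginal_eq (hp : ∀ x, 0 ≤ p x) (hA : ∀ x y, 0 ≤ A x y)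
    (hB : ∀ x y, 0 ≤ B x y) (habs : ∀ x y, 0 < p x * A x y → 0 < B x y) (x : ι) (y : κ) :
    p x * A x y * log (B x y / outputMarginal p B y)
      = p x * A x y * log (A x y / outputMarginal p A y)
        + p x * A x y * log (mismatchedJoint p A B x y / (p x * A x y)) := by
  rcases (mul_nonneg (hp x) (hA x y)).eq_or_lt with h | h
  · simp [← h]
  have hpB := mul_pos_of_mul_pos_left (hp x) h (habs x y h)
  rw [mismatchedJoint, log_div_eq_log_div_add_log (left_ne_zero_of_mul h.ne')
    (right_ne_zero_of_mul h.ne') (habs x y h).ne' (outputMarginal_pos hp hA h).ne'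
    (outputMarginal_pos hp hB hpB).ne', mul_add]

end Channel

theorem mismatched_MI_le_MI_general
    {𝓧 𝓨 : Type*} [Fintype 𝓧] [Fintype 𝓨]
    (p : 𝓧 → ℝ) (A B : 𝓧 → 𝓨 → ℝ)
    (hp0 : ∀ x, 0 ≤ p x)
    (hA0 : ∀ x y, 0 ≤ A x y)
    (hB0 : ∀ x y, 0 ≤ B x y)
    (habs : ∀ x y, 0 < p x * A x y → 0 < B x y) :
    ∑ x, ∑ y, p x * A x y * Real.log (B x y / (∑ x', p x' * B x' y))
      ≤ ∑ x, ∑ y, p x * A x y * Real.log (A x y / (∑ x', p x' * A x' y)) := by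
  set Q := mismatchedJoint p A B
  have hmass : ∑ z : 𝓧 × 𝓨, Q z.1 z.2 ≤ ∑ z : 𝓧 × 𝓨, p z.1 * A z.1 z.2 := by
    rw [Fintype.sum_prod_type_right', Fintype.sum_prod_type_right' (f := fun x y => p x * A x y)]
    exact sum_le_sum fun y _ => sum_mismatchedJoint_le hp0 hA0 y
  have hgibbs : ∑ x, ∑ y, p x * A x y * log (Q x y / (p x * A x y)) ≤ 0 := by
    rw [← Fintype.sum_prod_type' (f := fun x y => p x * A x y * log (Q x y / (p x * A x y)))]
    exact sum_mul_log_div_nonpos (fun z _ => mul_nonneg (hp0 z.1) (hA0 z.1 z.2))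
      (fun z _ => mismatchedJoint_nonneg hp0 hA0 hB0 z.1 z.2)
      (fun z _ => mismatchedJoint_pos hp0 hA0 hB0 habs) hmass
  have hsplit := mul_log_div_outputMarginal_eq hp0 hA0 hB0 habs
  simp only [outputMarginal] at hsplit
  simp only [hsplit, sum_add_distrib]
  linarith

/-- Mismatched information density has smaller expectation than the
true mutual information: `Σ p(x)A(x,y)·ln(B(x,y)/b(y)) ≤ Σ p(x)A(x,y)·ln(A(x,y)/a(y))`
whenever `B(x,y) > 0` on the support of `p(x)A(x,y)`.  (Summands with
`p(x)A(x,y) = 0` vanish automatically since the leading factor is `0`.) -/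
theorem mismatched_MI_le_MI
    {𝓧 𝓨 : Type*} [Fintype 𝓧] [Fintype 𝓨] [Nonempty 𝓧] [Nonempty 𝓨]
    (p : 𝓧 → ℝ) (A B : 𝓧 → 𝓨 → ℝ)
    (hp0 : ∀ x, 0 ≤ p x) (hp1 : ∑ x, p x = 1)
    (hA0 : ∀ x y, 0 ≤ A x y) (hA1 : ∀ x, ∑ y, A x y = 1)
    (hB0 : ∀ x y, 0 ≤ B x y) (hB1 : ∀ x, ∑ y, B x y = 1)
    (habs : ∀ x y, 0 < p x * A x y → 0 < B x y) :
    ∑ x, ∑ y, p x * A x y * Real.log (B x y / (∑ x', p x' * B x' y))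
      ≤ ∑ x, ∑ y, p x * A x y * Real.log (A x y / (∑ x', p x' * A x' y)) :=
  mismatched_MI_le_MI_general p A B hp0 hA0 hB0 habs
end

section
/- Fix δ ∈ [0,1] and an integer k ≥ 1. Consider the adder-erasure channel with i.i.d. Bernoulli(1/2) inputs: the joint pmf of (X_{[k]}, Y) on {0,1}^k × ({0,…,k} ∪ {e}) is P(x, i) = 2^{−k}·(1−δ)·1{ Σ_j x_j = i } for i ∈ {0,…,k} and P(x, e) = 2^{−k}·δ. Let ı(x, y) := ln( P_{Y|X}(y|x) / P_Y(y) ) for pairs with P(x,y) > 0 (here P_{Y|X}(i|x) = (1−δ)·1{Σx_j = i}, P_{Y|X}(e|x) = δ, P_Y(i) = (1−δ)C(k,i)2^{−k}, P_Y(e) = δ). Then the variance of ı under the joint pmf P equals (1−δ)·[ V_Z + δ·H_Z² ], where H_Z := Σ_{i=0}^{k} (C(k,i)/2^k)·ln( 2^k / C(k,i) ) and V_Z := Σ_{i=0}^{k} (C(k,i)/2^k)·ln²( 2^k / C(k,i) ) − H_Z² are the entropy and varentropy of the Binomial(k, 1/2) distribution. -/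
noncomputable section

/-- Joint pmf of inputs and output of the adder-erasure channel with erasure
probability `δ` and i.i.d. `Bernoulli(1/2)` inputs: output `some i` when
`Σ_j x_j = i` (w.p. `1−δ`), `none` = erasure. -/
def adderJointHalf (δ : ℝ) (k : ℕ)
    (z : (Fin k → Fin 2) × Option (Fin (k + 1))) : ℝ :=
  (2 : ℝ)⁻¹ ^ k *
    (match z.2 with
      | some i => (1 - δ) * (if (∑ j, ((z.1 j : ℕ))) = (i : ℕ) then 1 else 0)
      | none => δ)

/-- Information density `ı(x,y) = ln(P_{Y|X}(y|x)/P_Y(y))`, with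
`P_{Y|X}(i|x) = (1−δ)·1{Σx_j = i}`, `P_{Y|X}(e|x) = δ`,
`P_Y(i) = (1−δ)·C(k,i)·2^{−k}`, `P_Y(e) = δ`. -/
def adderDensity (δ : ℝ) (k : ℕ)
    (z : (Fin k → Fin 2) × Option (Fin (k + 1))) : ℝ :=
  match z.2 with
    | some i => Real.log (((1 - δ) * (if (∑ j, ((z.1 j : ℕ))) = (i : ℕ) then 1 else 0))
        / ((1 - δ) * (k.choose (i : ℕ) : ℝ) / 2 ^ k))
    | none => Real.log (δ / δ)

/-- Shannon entropy (nats) of the `Binomial(k, 1/2)` distribution. -/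
def binomH (k : ℕ) : ℝ :=
  ∑ i ∈ Finset.range (k + 1),
    ((k.choose i : ℝ) / 2 ^ k) * Real.log ((2 : ℝ) ^ k / (k.choose i : ℝ))

/-- Varentropy (nats²) of the `Binomial(k, 1/2)` distribution. -/
def binomV (k : ℕ) : ℝ :=
  (∑ i ∈ Finset.range (k + 1),
      ((k.choose i : ℝ) / 2 ^ k) * (Real.log ((2 : ℝ) ^ k / (k.choose i : ℝ))) ^ 2)
    - (binomH k) ^ 2

/-!
The density vanishes on erasures, and on the support of an unerased output `i` it equals the
self-information `log (2^k / C(k,i))` of the binomial law for every `δ ≠ 1`. Since exactly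
`C(k,i)` inputs have weight `i`, every moment `E[φ(ı)]` with `φ 0 = 0` is `(1 - δ)` times the
corresponding binomial moment, and the variance identity is
`(1 - δ)(V + H²) - (1 - δ)² H² = (1 - δ)(V + δ H²)`.
-/

open Finset

lemma sum_fin_two_val_eq_card {ι : Type*} [Fintype ι] (x : ι → Fin 2) :
    ∑ j, (x j : ℕ) = #{j | x j = 1} := by
  rw [card_filter]
  refine sum_congr rfl fun j _ => ?_
  generalize x j = a
  fin_cases a <;> rfl

lemma card_sum_fin_two_eq_choose {ι : Type*} [Fintype ι] [DecidableEq ι] (i : ℕ) :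
    #{x : ι → Fin 2 | ∑ j, (x j : ℕ) = i} = (Fintype.card ι).choose i := by
  rw [← card_univ, ← card_powersetCard]
  refine card_bij' (fun x _ => ({j | x j = 1} : Finset ι)) (fun s _ j => if j ∈ s then 1 else 0)
    (fun x hx => ?_) (fun s hs => ?_) (fun x _ => ?_) (fun s _ => ?_)
  · simp_all [sum_fin_two_val_eq_card]
  · simp_all [sum_fin_two_val_eq_card, mem_powersetCard]
  · funext j
    generalize hj : x j = a
    fin_cases a <;> simp [hj]
  · ext j
    simp

lemma adderDensity_none (δ : ℝ) (k : ℕ) (x : Fin k → Fin 2) :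
    adderDensity δ k (x, none) = 0 := by
  rcases eq_or_ne δ 0 with rfl | hδ
  · simp [adderDensity]
  · simp [adderDensity, div_self hδ]

lemma adderJointHalf_mul_some (δ : ℝ) (k : ℕ) (x : Fin k → Fin 2) (i : Fin (k + 1))
    (φ : ℝ → ℝ) :
    adderJointHalf δ k (x, some i) * φ (adderDensity δ k (x, some i))
      = if ∑ j, (x j : ℕ) = i then
          (1 - δ) * 2⁻¹ ^ k * φ (Real.log (2 ^ k / k.choose i)) else 0 := by
  split_ifs with hx
  · -- at `δ = 1` the density is the junk value `log 0 = 0`, but its weight vanishes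
    rcases eq_or_ne δ 1 with rfl | hδ
    · simp [adderJointHalf]
    have hchoose : (k.choose i : ℝ) ≠ 0 := by
      exact_mod_cast (Nat.choose_pos (Nat.lt_succ_iff.mp i.isLt)).ne'
    have hdensity : adderDensity δ k (x, some i) = Real.log (2 ^ k / k.choose i) := by
      simp only [adderDensity, hx, if_true]
      congr 1
      field_simp [sub_ne_zero.mpr hδ.symm]
    simp only [hdensity, adderJointHalf, hx, if_true]
    ring
  · simp [adderJointHalf, hx]

theorem sum_adderJointHalf_mul (δ : ℝ) (k : ℕ) (φ : ℝ → ℝ) (hφ : φ 0 = 0) :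
    ∑ z, adderJointHalf δ k z * φ (adderDensity δ k z)
      = (1 - δ) * ∑ i ∈ range (k + 1),
          ((k.choose i : ℝ) / 2 ^ k) * φ (Real.log (2 ^ k / k.choose i)) := by
  simp only [Fintype.sum_prod_type, Fintype.sum_option, adderDensity_none, hφ, mul_zero,
    zero_add, adderJointHalf_mul_some]
  rw [sum_comm, ← Fin.sum_univ_eq_sum_range, mul_sum]
  refine sum_congr rfl fun i _ => ?_
  rw [← sum_filter, sum_const, card_sum_fin_two_eq_choose, Fintype.card_fin, nsmul_eq_mul,
    inv_pow]
  ring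

theorem adder_erasure_density_variance_general
    (δ : ℝ) (k : ℕ) :
    (∑ z : (Fin k → Fin 2) × Option (Fin (k + 1)),
          adderJointHalf δ k z * (adderDensity δ k z) ^ 2)
        - (∑ z : (Fin k → Fin 2) × Option (Fin (k + 1)),
            adderJointHalf δ k z * adderDensity δ k z) ^ 2
      = (1 - δ) * (binomV k + δ * (binomH k) ^ 2) := by
  rw [sum_adderJointHalf_mul δ k (· ^ 2) (zero_pow two_ne_zero),
    sum_adderJointHalf_mul δ k (fun a => a) rfl, binomV, binomH]
  ring

/-- The variance of the information density of the adder-erasure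
channel with i.i.d. `Bernoulli(1/2)` inputs equals `(1−δ)·(V_Z + δ·H_Z²)`. -/
theorem adder_erasure_density_variance
    (δ : ℝ) (hδ0 : 0 ≤ δ) (hδ1 : δ ≤ 1) (k : ℕ) (hk : 1 ≤ k) :
    (∑ z : (Fin k → Fin 2) × Option (Fin (k + 1)),
          adderJointHalf δ k z * (adderDensity δ k z) ^ 2)
        - (∑ z : (Fin k → Fin 2) × Option (Fin (k + 1)),
            adderJointHalf δ k z * adderDensity δ k z) ^ 2
      = (1 - δ) * (binomV k + δ * (binomH k) ^ 2) :=
  adder_erasure_density_variance_general δ k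
end
end
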